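/- Let S and A be measurable spaces, p : S → A → ProbabilityMeasure S a measurable Markov kernel, and d ≥ 1. For an augmented state x = (s₁, a₁, …, a_d) ∈ S × A^d, let b(x) denote the belief: the iterated bind b₀ = δ_{s₁}, b_k = b_{k−1}.bind (s ↦ p(s, a_k)), b(x) = b_d; and for an action a ∈ A let p̃(x, a) denote the augmented transition: the pushforward of p(s₁, a₁) under the map s₂ ↦ (s₂, a₂, …, a_d, a). Then for every x ∈ S × A^d and a ∈ A, the following two probability measures on S coincide: (b(x)).bind (s ↦ p(s, a)) = (p̃(x, a)).bind (x' ↦ b(x')). -/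

import Mathlib

open MeasureTheory

/-- The belief over the current state given a last observed state `s₁` and a queue of actions
`as = [a₁, …, a_d]`: the iterated bind of `δ_{s₁}` through the kernel `p` with the actions of
the queue, applied in order. -/
noncomputable def belief {S A : Type*} [MeasurableSpace S]
    (p : S → A → Measure S) (s₁ : S) (as : List A) : Measure S :=
  as.foldl (fun b a => b.bind fun s => p s a) (Measure.dirac s₁)

/-- Shift an action queue `(a₁, …, a_d)`, dropping the oldest action and appending the new
action `a`, producing `(a₂, …, a_d, a)`. -/
def shiftQueue {A : Type*} {d : ℕ} (q : Fin d → A) (a : A) : Fin d → A :=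
  fun i => if h : (i : ℕ) + 1 < d then q ⟨(i : ℕ) + 1, h⟩ else a

/-!
Both sides are the belief of the queue `(a₁, …, a_d, a)`, read in two ways. Binding the belief
once more appends `a` at the back of the fold; by associativity of `bind` (Chapman–Kolmogorov)
the same measure is obtained by first moving with `a₁` and then folding the remaining queue
`(a₂, …, a_d, a)`, which is the shifted queue. To push the pushforward of the augmented
transition through the outer `bind`, the belief must be measurable jointly in the observed state
and the queue; this comes from measurability of integrals against an s-finite kernel.
-/

namespace MeasureTheory.Measure

theorem bind_map {α β γ : Type*} [MeasurableSpace α] [MeasurableSpace β] [MeasurableSpace γ]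
    {μ : Measure α} {f : α → β} {g : β → Measure γ} (hf : Measurable f) (hg : Measurable g) :
    (μ.map f).bind g = μ.bind (g ∘ f) := by
  rw [bind, bind, map_map hg hf]

end MeasureTheory.Measure

theorem ProbabilityTheory.Kernel.measurable_bind {X Y Z : Type*} [MeasurableSpace X]
    [MeasurableSpace Y] [MeasurableSpace Z] (κ : Kernel X Y) [IsSFiniteKernel κ]
    {η : X × Y → Measure Z} (hη : Measurable η) :
    Measurable fun x => (κ x).bind fun y => η (x, y) := by
  refine Measure.measurable_of_measurable_coe _ fun B hB => ?_
  have hB_eq : (fun x => (κ x).bind (fun y => η (x, y)) B) = fun x => ∫⁻ y, η (x, y) B ∂κ x :=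
    funext fun x => Measure.bind_apply hB (hη.comp measurable_prodMk_left).aemeasurable
  rw [hB_eq]
  exact ((Measure.measurable_coe hB).comp hη).lintegral_kernel_prod_right'

section Belief

variable {S A : Type*} [MeasurableSpace S] {p : S → A → Measure S}

theorem belief_append_singleton (s : S) (l : List A) (a : A) :
    belief p s (l ++ [a]) = (belief p s l).bind fun s' => p s' a := by
  simp only [belief, List.foldl_append, List.foldl_cons, List.foldl_nil]

theorem measurable_belief (hp : ∀ a, Measurable fun s => p s a) (l : List A) :
    Measurable fun s => belief p s l := by
  induction l using List.reverseRecOn with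
  | nil => exact Measure.measurable_dirac
  | append_singleton l a ih =>
    simp_rw [belief_append_singleton]
    exact (Measure.measurable_bind' (hp a)).comp ih

theorem belief_cons (hp : ∀ a, Measurable fun s => p s a) (s : S) (a : A) (l : List A) :
    belief p s (a :: l) = (p s a).bind fun s' => belief p s' l := by
  induction l using List.reverseRecOn with
  | nil => exact (Measure.dirac_bind (hp a) s).trans Measure.bind_dirac.symm
  | append_singleton l b ih =>
    rw [← List.cons_append, belief_append_singleton, ih,
      Measure.bind_bind (measurable_belief hp l).aemeasurable (hp b).aemeasurable]
    simp only [belief_append_singleton]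

theorem measurable_belief_ofFn [MeasurableSpace A] (hp_prob : ∀ s a, IsProbabilityMeasure (p s a))
    (hp_meas : Measurable fun q : S × A => p q.1 q.2) (d : ℕ) :
    Measurable fun x : S × (Fin d → A) => belief p x.1 (List.ofFn x.2) := by
  have hp : ∀ a, Measurable fun s => p s a := fun a => hp_meas.comp measurable_prodMk_right
  induction d with
  | zero => exact Measure.measurable_dirac.comp measurable_fst
  | succ n ih =>
    let first : ProbabilityTheory.Kernel (S × (Fin (n + 1) → A)) S :=
      ⟨fun x => p x.1 (x.2 0),
        hp_meas.comp (measurable_fst.prodMk ((measurable_pi_apply 0).comp measurable_snd))⟩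
    have : ProbabilityTheory.IsMarkovKernel first := ⟨fun x => hp_prob x.1 (x.2 0)⟩
    have h_cons : (fun x : S × (Fin (n + 1) → A) => belief p x.1 (List.ofFn x.2)) =
        fun x => (first x).bind fun s => belief p s (List.ofFn (Fin.tail x.2)) := by
      funext x
      rw [List.ofFn_succ, belief_cons hp]
      rfl
    have h_tail : Measurable fun v : Fin (n + 1) → A => Fin.tail v :=
      measurable_pi_lambda _ fun i => measurable_pi_apply (Fin.succ i)
    have h_shift : Measurable fun y : (S × (Fin (n + 1) → A)) × S => (y.2, Fin.tail y.1.2) :=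
      measurable_snd.prodMk (h_tail.comp (measurable_snd.comp measurable_fst))
    rw [h_cons]
    exact first.measurable_bind (η := fun y => belief p y.2 (List.ofFn (Fin.tail y.1.2)))
      -- elaborated without expected type; unifying against `belief` first unfolds the fold
      (ih.comp h_shift :)

end Belief

theorem ofFn_shiftQueue {A : Type*} {n : ℕ} (q : Fin (n + 1) → A) (a : A) :
    List.ofFn (shiftQueue q a) = List.ofFn (Fin.tail q) ++ [a] := by
  rw [List.ofFn_succ', List.concat_eq_append]
  congr
  · funext i
    exact dif_pos (Nat.succ_lt_succ i.isLt)
  · exact dif_neg (lt_irrefl _)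

/-- **Commutation identity (key step of Lemma 1).** Taking the belief of an augmented state and
then one transition step equals taking one augmented transition and then the belief:
`b(x).bind (p(·,a)) = p̃(x,a).bind b`. -/
theorem belief_augmented_comm {S A : Type*} [MeasurableSpace S] [MeasurableSpace A]
    (p : S → A → Measure S) (hp_prob : ∀ s a, IsProbabilityMeasure (p s a))
    (hp_meas : Measurable fun q : S × A => p q.1 q.2)
    (d : ℕ) (hd : 0 < d) (s₁ : S) (q : Fin d → A) (a : A) :
    (belief p s₁ (List.ofFn q)).bind (fun s => p s a) =
      ((p s₁ (q ⟨0, hd⟩)).map (fun s₂ => (s₂, shiftQueue q a))).bind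
        (fun x' : S × (Fin d → A) => belief p x'.1 (List.ofFn x'.2)) := by
  obtain ⟨n, rfl⟩ : ∃ n, d = n + 1 := ⟨d - 1, (Nat.succ_pred_eq_of_pos hd).symm⟩
  have hp : ∀ a, Measurable fun s => p s a := fun a => hp_meas.comp measurable_prodMk_right
  calc (belief p s₁ (List.ofFn q)).bind (fun s => p s a)
      = belief p s₁ (q 0 :: (List.ofFn (Fin.tail q) ++ [a])) := by
        rw [← belief_append_singleton, List.ofFn_succ, List.cons_append]; rfl
    _ = (p s₁ (q 0)).bind fun s₂ => belief p s₂ (List.ofFn (shiftQueue q a)) := by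
        rw [belief_cons hp, ofFn_shiftQueue]
    _ = _ := (Measure.bind_map (measurable_id.prodMk measurable_const)
        (measurable_belief_ofFn hp_prob hp_meas _)).symm
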